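/- For every multi-index α with |α| ≥ 1, the partial derivative D^α ϑ(a) of the gluing angle at a point a ≠ 0 is a linear combination of terms a^β/|a|^k with k ≤ 2|α| and |β| ≤ |α|. Consequently, for all α there is a constant C > 0 with |D^α ϑ(a)| ≤ C·|ln R(a)|^{|α|} for small a ≠ 0, where R(a) = e^{1/|a|} - e. -/

import Mathlib

/-- Partial derivative of `f : ℂ → ℝ` in the (real) direction `w`. -/
noncomputable def pdC (w : ℂ) (f : ℂ → ℝ) : ℂ → ℝ := fun a => fderiv ℝ f a w

/-- Iterated partial derivative `D^α = ∂_x^{α₁} ∂_y^{α₂}` for a multi-index `α`. -/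
noncomputable def DmixC (α : ℕ × ℕ) (f : ℂ → ℝ) : ℂ → ℝ :=
  (pdC 1)^[α.1] ((pdC Complex.I)^[α.2] f)

/-- The gluing length `R(a) = e^{1/|a|} - e`. -/
noncomputable def gluingLength (a : ℂ) : ℝ :=
  Real.exp (1 / ‖a‖) - Real.exp 1

/-- The gluing angle: locally (for `re a ≠ 0`, up to constants)
`2π·ϑ(a) = -arctan(im a / re a)`. -/
noncomputable def gluingAngle (a : ℂ) : ℝ :=
  -Real.arctan (a.im / a.re) / (2 * Real.pi)

/-!
On the chart `re a ≠ 0` one has `2π dϑ = (y dx - x dy) / |a|²`, and a partial derivative of a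
monomial `x^p y^q / |a|^{2m}` is a combination of four monomials of the same kind, with `p + q`
and `m` raised by at most one and the degree of homogeneity `p + q - 2m` lowered by at most one.
Hence `D^α ϑ` is a combination of monomials with `p + q ≤ |α|`, `m ≤ |α|` and degree `≥ -|α|`,
so `|D^α ϑ(a)| = O(|a|^{-|α|})` for `|a| ≤ 1`. Finally `R(a) ≥ e^{1/(2|a|)}` for `|a| < 1/2`,
i.e. `1/|a| ≤ 2 ln R(a)`.
-/

open Complex Set Submodule

section PartialDerivative

variable {f g : ℂ → ℝ} {w a : ℂ}

lemma pdC_congr_of_eqOn {s : Set ℂ} (hs : IsOpen s) (h : EqOn f g s) (ha : a ∈ s) :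
    pdC w f a = pdC w g a := by
  rw [pdC, pdC, Filter.EventuallyEq.fderiv_eq (Filter.eventuallyEq_of_mem (hs.mem_nhds ha) h)]

lemma pdC_add (hf : DifferentiableAt ℝ f a) (hg : DifferentiableAt ℝ g a) :
    pdC w (f + g) a = pdC w f a + pdC w g a := by
  rw [pdC, fderiv_add hf hg]
  rfl

lemma pdC_smul (c : ℝ) : pdC w (c • f) a = c * pdC w f a := by
  rw [pdC, fderiv_const_smul_field]
  rfl

lemma pdC_zero : pdC w 0 a = 0 := by
  rw [pdC, fderiv_zero]
  rfl

end PartialDerivative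

lemma DifferentiableOn.of_mem_span {𝕜 E F : Type*} [NontriviallyNormedField 𝕜]
    [NormedAddCommGroup E] [NormedSpace 𝕜 E] [NormedAddCommGroup F] [NormedSpace 𝕜 F]
    {S : Set (E → F)} {s : Set E} (hS : ∀ f ∈ S, DifferentiableOn 𝕜 f s) {g : E → F}
    (hg : g ∈ span 𝕜 S) : DifferentiableOn 𝕜 g s := by
  induction hg using span_induction with
  | mem f hf => exact hS f hf
  | zero => exact differentiableOn_const 0
  | add f g _ _ hf hg => exact hf.add hg
  | smul c f _ hf => exact hf.const_smul c

noncomputable def normMonomial (p q m : ℕ) (a : ℂ) : ℝ :=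
  a.re ^ p * a.im ^ q / ‖a‖ ^ (2 * m)

lemma normMonomial_eq_div_pow_re_sq_add_im_sq (p q m : ℕ) :
    normMonomial p q m = fun a => a.re ^ p * a.im ^ q / (a.re ^ 2 + a.im ^ 2) ^ m := by
  funext a
  rw [normMonomial, pow_mul, Complex.sq_norm, normSq_apply]
  ring_nf

lemma hasFDerivAt_normMonomial (p q m : ℕ) {a : ℂ} (ha : a ≠ 0) :
    HasFDerivAt (normMonomial p q m)
      ((p * normMonomial (p - 1) q m a - 2 * m * normMonomial (p + 1) q (m + 1) a) • reCLM
        + (q * normMonomial p (q - 1) m a - 2 * m * normMonomial p (q + 1) (m + 1) a) • imCLM)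
      a := by
  have hN : a.re ^ 2 + a.im ^ 2 ≠ 0 := by
    simpa [normSq_apply, sq] using (normSq_pos.2 ha).ne'
  have hx := reCLM.hasFDerivAt (x := a)
  have hy := imCLM.hasFDerivAt (x := a)
  have hNm := ((hx.pow 2).add (hy.pow 2)).pow m
  have h := ((hx.pow p).mul (hy.pow q)).mul
    ((hasDerivAt_inv (pow_ne_zero m hN)).comp_hasFDerivAt a hNm)
  simp only [normMonomial_eq_div_pow_re_sq_add_im_sq, div_eq_mul_inv]
  refine h.congr_fderiv ?_
  ext w
  simp only [reCLM_apply, imCLM_apply, Pi.mul_apply, Pi.add_apply, nsmul_eq_mul,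
    Nat.add_one_sub_one, pow_one, Nat.cast_ofNat, smul_add, neg_smul, smul_neg,
    Function.comp_apply, add_apply, neg_apply, smul_apply, smul_eq_mul]
  rcases m with _ | m
  · simp only [pow_zero, inv_one, CharP.cast_eq_zero, zero_tsub, mul_one, zero_mul, mul_zero,
      neg_zero, add_zero, zero_add, sub_zero]
    ring
  · simp only [add_tsub_cancel_right]
    field_simp
    ring

lemma pdC_normMonomial (p q m : ℕ) (w : ℂ) {a : ℂ} (ha : a ≠ 0) :
    pdC w (normMonomial p q m) a =
      w.re * (p * normMonomial (p - 1) q m a - 2 * m * normMonomial (p + 1) q (m + 1) a)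
        + w.im * (q * normMonomial p (q - 1) m a - 2 * m * normMonomial p (q + 1) (m + 1) a) := by
  rw [pdC, (hasFDerivAt_normMonomial p q m ha).fderiv]
  simp only [add_apply, smul_apply, reCLM_apply, imCLM_apply, smul_eq_mul]
  ring

/-- The constraint `2 * m ≤ p + q + M` makes `normMonomial p q m` homogeneous of degree at
least `-M`, hence `O(‖a‖⁻¹ ^ M)` near `0`. -/
def normMonomials (M : ℕ) : Set (ℂ → ℝ) :=
  {f | ∃ p q m, p + q ≤ M ∧ m ≤ M ∧ 2 * m ≤ p + q + M ∧ f = normMonomial p q m}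

lemma differentiableOn_of_mem_span_normMonomials {M : ℕ} {g : ℂ → ℝ}
    (hg : g ∈ span ℝ (normMonomials M)) : DifferentiableOn ℝ g {a | a ≠ 0} := by
  refine DifferentiableOn.of_mem_span ?_ hg
  rintro f ⟨p, q, m, -, -, -, rfl⟩ a ha
  exact (hasFDerivAt_normMonomial p q m ha).differentiableAt.differentiableWithinAt

lemma exists_eqOn_pdC_of_mem_span_normMonomials {M : ℕ} (w : ℂ) {g : ℂ → ℝ}
    (hg : g ∈ span ℝ (normMonomials M)) :
    ∃ h ∈ span ℝ (normMonomials (M + 1)), EqOn (pdC w g) h {a | a ≠ 0} := by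
  have hdiff {f : ℂ → ℝ} (hf : f ∈ span ℝ (normMonomials M)) {a : ℂ} (ha : a ≠ 0) :
      DifferentiableAt ℝ f a :=
    (differentiableOn_of_mem_span_normMonomials hf).differentiableAt
      (isOpen_ne.mem_nhds ha)
  induction hg using span_induction with
  | mem f hf =>
    obtain ⟨p, q, m, hpq, hm, hpqm, rfl⟩ := hf
    have hmem (p' q' m' : ℕ) (h₁ : p' + q' ≤ M + 1) (h₂ : m' ≤ M + 1)
        (h₃ : 2 * m' ≤ p' + q' + (M + 1)) :
        normMonomial p' q' m' ∈ span ℝ (normMonomials (M + 1)) :=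
      subset_span ⟨p', q', m', h₁, h₂, h₃, rfl⟩
    refine ⟨(w.re * p) • normMonomial (p - 1) q m - (2 * w.re * m) • normMonomial (p + 1) q (m + 1)
      + (w.im * q) • normMonomial p (q - 1) m - (2 * w.im * m) • normMonomial p (q + 1) (m + 1),
      ?_, fun a ha => ?_⟩
    · refine sub_mem (add_mem (sub_mem ?_ ?_) ?_) ?_ <;>
        refine smul_mem _ _ (hmem _ _ _ ?_ ?_ ?_) <;> omega
    · rw [pdC_normMonomial p q m w ha]
      simp only [Pi.add_apply, Pi.sub_apply, Pi.smul_apply, smul_eq_mul]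
      ring
  | zero => exact ⟨0, zero_mem _, fun a _ => pdC_zero⟩
  | add f g hf hg ihf ihg =>
    obtain ⟨F, hF, hfF⟩ := ihf
    obtain ⟨G, hG, hgG⟩ := ihg
    exact ⟨F + G, add_mem hF hG, fun a ha => by
      rw [pdC_add (hdiff hf ha) (hdiff hg ha), hfF ha, hgG ha, Pi.add_apply]⟩
  | smul c f _ ihf =>
    obtain ⟨F, hF, hfF⟩ := ihf
    exact ⟨c • F, smul_mem _ c hF, fun a ha => by rw [pdC_smul, hfF ha, Pi.smul_apply, smul_eq_mul]⟩

lemma exists_abs_le_of_mem_span_normMonomials {M : ℕ} {g : ℂ → ℝ}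
    (hg : g ∈ span ℝ (normMonomials M)) :
    ∃ C > 0, ∀ a : ℂ, a ≠ 0 → ‖a‖ ≤ 1 → |g a| ≤ C * ‖a‖⁻¹ ^ M := by
  induction hg using span_induction with
  | mem f hf =>
    obtain ⟨p, q, m, hpq, -, hpqm, rfl⟩ := hf
    refine ⟨1, one_pos, fun a ha h1 => ?_⟩
    have hr : 0 < ‖a‖ := norm_pos_iff.2 ha
    calc |normMonomial p q m a| = |a.re| ^ p * |a.im| ^ q / ‖a‖ ^ (2 * m) := by
          simp only [normMonomial, abs_div, abs_mul, abs_pow, abs_norm]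
      _ ≤ ‖a‖ ^ p * ‖a‖ ^ q / ‖a‖ ^ (2 * m) := by
          gcongr
          exacts [abs_re_le_norm a, abs_im_le_norm a]
      _ = ‖a‖ ^ (p + q + M) / ‖a‖ ^ (2 * m) * ‖a‖⁻¹ ^ M := by
          rw [pow_add, pow_add, inv_pow]
          field_simp
      _ ≤ 1 * ‖a‖⁻¹ ^ M := by
          gcongr
          rw [div_le_one (by positivity)]
          exact pow_le_pow_of_le_one hr.le h1 hpqm
  | zero => exact ⟨1, one_pos, fun a _ _ => by rw [Pi.zero_apply, abs_zero]; positivity⟩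
  | add f g _ _ ihf ihg =>
    obtain ⟨C, hC, hf⟩ := ihf
    obtain ⟨D, hD, hg⟩ := ihg
    refine ⟨C + D, add_pos hC hD, fun a ha h1 => ?_⟩
    calc |f a + g a| ≤ |f a| + |g a| := abs_add_le _ _
      _ ≤ C * ‖a‖⁻¹ ^ M + D * ‖a‖⁻¹ ^ M := add_le_add (hf a ha h1) (hg a ha h1)
      _ = (C + D) * ‖a‖⁻¹ ^ M := by ring
  | smul c f _ ihf =>
    obtain ⟨C, hC, hf⟩ := ihf
    refine ⟨(|c| + 1) * C, by positivity, fun a ha h1 => ?_⟩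
    calc |c * f a| = |c| * |f a| := abs_mul _ _
      _ ≤ (|c| + 1) * (C * ‖a‖⁻¹ ^ M) :=
        mul_le_mul (by linarith) (hf a ha h1) (abs_nonneg _) (by positivity)
      _ = (|c| + 1) * C * ‖a‖⁻¹ ^ M := by ring

/-- Only agreement on the chart `re a ≠ 0` is asked for: off it `gluingAngle` takes junk values. -/
def IsNormMonomialSum (M : ℕ) (f : ℂ → ℝ) : Prop :=
  ∃ g ∈ span ℝ (normMonomials M), EqOn f g {a | a.re ≠ 0}

lemma IsNormMonomialSum.pdC {M : ℕ} {f : ℂ → ℝ} (hf : IsNormMonomialSum M f) (w : ℂ) :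
    IsNormMonomialSum (M + 1) (_root_.pdC w f) := by
  obtain ⟨g, hg, hfg⟩ := hf
  obtain ⟨h, hh, hgh⟩ := exists_eqOn_pdC_of_mem_span_normMonomials w hg
  refine ⟨h, hh, fun a ha => ?_⟩
  rw [pdC_congr_of_eqOn (isOpen_ne_fun continuous_re continuous_const) hfg ha]
  exact hgh fun h0 => ha (by rw [h0, zero_re])

lemma IsNormMonomialSum.iterate_pdC {M : ℕ} {f : ℂ → ℝ} (hf : IsNormMonomialSum M f) (w : ℂ)
    (t : ℕ) : IsNormMonomialSum (M + t) ((_root_.pdC w)^[t] f) := by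
  induction t with
  | zero => exact hf
  | succ t ih =>
    rw [Function.iterate_succ_apply']
    exact ih.pdC w

lemma pdC_gluingAngle (w : ℂ) {a : ℂ} (ha : a.re ≠ 0) :
    pdC w gluingAngle a =
      (2 * Real.pi)⁻¹ * (w.re * normMonomial 0 1 1 a - w.im * normMonomial 1 0 1 a) := by
  have hx := reCLM.hasFDerivAt (x := a)
  have hy := imCLM.hasFDerivAt (x := a)
  have h : HasFDerivAt gluingAngle _ a := (((Real.hasDerivAt_arctan _).comp_hasFDerivAt a
    (hy.mul ((hasDerivAt_inv ha).comp_hasFDerivAt a hx))).neg).mul_const (2 * Real.pi)⁻¹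
  rw [pdC, h.fderiv]
  simp only [normMonomial_eq_div_pow_re_sq_add_im_sq, Pi.mul_apply, Function.comp_apply,
    reCLM_apply, imCLM_apply, add_apply, neg_apply, smul_apply, smul_eq_mul, pow_zero, pow_one,
    one_mul, mul_one]
  field_simp
  ring

lemma isNormMonomialSum_pdC_gluingAngle (w : ℂ) : IsNormMonomialSum 1 (pdC w gluingAngle) := by
  have hmem (p q : ℕ) (hpq : p + q = 1) : normMonomial p q 1 ∈ span ℝ (normMonomials 1) :=
    subset_span ⟨p, q, 1, hpq.le, le_rfl, by omega, rfl⟩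
  refine ⟨((2 * Real.pi)⁻¹ * w.re) • normMonomial 0 1 1
      - ((2 * Real.pi)⁻¹ * w.im) • normMonomial 1 0 1,
    sub_mem (smul_mem _ _ (hmem 0 1 rfl)) (smul_mem _ _ (hmem 1 0 rfl)), fun a ha => ?_⟩
  rw [pdC_gluingAngle w ha]
  simp only [Pi.sub_apply, Pi.smul_apply, smul_eq_mul]
  ring

lemma isNormMonomialSum_DmixC_gluingAngle {α : ℕ × ℕ} (hα : 1 ≤ α.1 + α.2) :
    IsNormMonomialSum (α.1 + α.2) (DmixC α gluingAngle) := by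
  obtain ⟨i, j⟩ := α
  rcases j with _ | j
  · obtain ⟨i, rfl⟩ : ∃ i', i = i' + 1 := ⟨i - 1, by omega⟩
    have h := (isNormMonomialSum_pdC_gluingAngle 1).iterate_pdC 1 i
    rw [DmixC, Function.iterate_succ_apply]
    rwa [add_comm 1 i] at h
  · have h := ((isNormMonomialSum_pdC_gluingAngle I).iterate_pdC I j).iterate_pdC 1 i
    rw [DmixC, Function.iterate_succ_apply]
    convert h using 1
    omega

lemma exists_sum_eq_of_mem_span_normMonomials {M : ℕ} {g : ℂ → ℝ}
    (hg : g ∈ span ℝ (normMonomials M)) :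
    ∃ (n : ℕ) (c : Fin n → ℝ) (k : Fin n → ℕ) (β : Fin n → ℕ × ℕ),
      (∀ j, k j ≤ 2 * M ∧ (β j).1 + (β j).2 ≤ M) ∧
      ∀ a : ℂ, g a = ∑ j : Fin n, c j * a.re ^ (β j).1 * a.im ^ (β j).2 / ‖a‖ ^ k j := by
  obtain ⟨n, c, f, rfl⟩ := mem_span_set'.1 hg
  choose p q m hpq hm _ hf using fun j => (f j).2
  refine ⟨n, c, fun j => 2 * m j, fun j => (p j, q j), fun j => ⟨Nat.mul_le_mul_left 2 (hm j), hpq j⟩, fun a => ?_⟩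
  simp only [Finset.sum_apply, Pi.smul_apply, smul_eq_mul, hf, normMonomial]
  refine Finset.sum_congr rfl fun j _ => ?_
  ring

lemma inv_norm_le_two_mul_log_gluingLength {a : ℂ} (ha : a ≠ 0) (hsmall : ‖a‖ < 1 / 2) :
    ‖a‖⁻¹ ≤ 2 * Real.log (gluingLength a) := by
  have hr : 0 < ‖a‖ := norm_pos_iff.2 ha
  have ht : 2 < 1 / ‖a‖ := by rw [lt_div_iff₀ hr]; linarith
  set u := Real.exp (1 / ‖a‖ / 2)
  have hu : Real.exp 1 ≤ u := Real.exp_le_exp.2 (by linarith)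
  have he : 2 < Real.exp 1 := by linarith [Real.exp_one_gt_d9]
  -- `R(a) = u ^ 2 - e ≥ u` because `u ≥ e > 2`
  have hR : u ≤ gluingLength a := by
    rw [gluingLength, show 1 / ‖a‖ = 1 / ‖a‖ / 2 + 1 / ‖a‖ / 2 by ring, Real.exp_add]
    nlinarith
  have hlog := (Real.le_log_iff_exp_le ((Real.exp_pos _).trans_le hR)).2 hR
  rw [one_div] at hlog
  linarith

/-- For every multi-index `α` with `|α| ≥ 1`, the derivative `D^α ϑ(a)` (at points
`a ≠ 0`, here in the chart `re a ≠ 0`) is a linear combination of terms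
`a^β/|a|^k` with `k ≤ 2|α|` and `|β| ≤ |α|`; consequently
`|D^α ϑ(a)| ≤ C·|ln R(a)|^{|α|}` for small `a ≠ 0`. -/
theorem stmt3 (α : ℕ × ℕ) (hα : 1 ≤ α.1 + α.2) :
    (∃ (n : ℕ) (c : Fin n → ℝ) (k : Fin n → ℕ) (β : Fin n → ℕ × ℕ),
      (∀ j, k j ≤ 2 * (α.1 + α.2) ∧ (β j).1 + (β j).2 ≤ α.1 + α.2) ∧
      ∀ a : ℂ, a.re ≠ 0 →
        DmixC α gluingAngle a =
          ∑ j : Fin n, c j * a.re ^ (β j).1 * a.im ^ (β j).2 / ‖a‖ ^ k j) ∧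
    ∃ C > (0 : ℝ), ∀ a : ℂ, a ≠ 0 → ‖a‖ < 1 / 2 → a.re ≠ 0 →
      |DmixC α gluingAngle a| ≤ C * |Real.log (gluingLength a)| ^ (α.1 + α.2) := by
  obtain ⟨g, hg, hDg⟩ := isNormMonomialSum_DmixC_gluingAngle hα
  constructor
  · obtain ⟨n, c, k, β, hbound, hsum⟩ := exists_sum_eq_of_mem_span_normMonomials hg
    exact ⟨n, c, k, β, hbound, fun a ha => (hDg ha).trans (hsum a)⟩
  · obtain ⟨C, hC, hgC⟩ := exists_abs_le_of_mem_span_normMonomials hg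
    refine ⟨C * 2 ^ (α.1 + α.2), by positivity, fun a ha hsmall hre => ?_⟩
    have hlog : ‖a‖⁻¹ ≤ 2 * |Real.log (gluingLength a)| :=
      (inv_norm_le_two_mul_log_gluingLength ha hsmall).trans (by gcongr; exact le_abs_self _)
    calc |DmixC α gluingAngle a| = |g a| := by rw [hDg hre]
      _ ≤ C * ‖a‖⁻¹ ^ (α.1 + α.2) := hgC a ha (by linarith)
      _ ≤ C * (2 * |Real.log (gluingLength a)|) ^ (α.1 + α.2) := by gcongr
      _ = C * 2 ^ (α.1 + α.2) * |Real.log (gluingLength a)| ^ (α.1 + α.2) := by ring
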